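/- A tensor Q ∈ ℝ^{n×n×I₃} is orthogonal with respect to the t-product (Qᵀ * Q = Q * Qᵀ = I) if and only if every frontal slice of its Fourier transform Q̂ = fft(Q,[],3) is a unitary matrix. -/

import Mathlib

open scoped BigOperators
open Matrix

/-- A third-order real tensor of size a × b × n; the third (tube) mode is
indexed by `ZMod n` so that the circular structure of the t-product is built in
(index k corresponds to frontal slice k+1 of the paper). -/
abbrev Tensor3 (a b n : ℕ) : Type := Fin a → Fin b → ZMod n → ℝ

/-- The t-product X * Y = fold(circ(X) · unfold(Y)). -/
def tmul {a b c n : ℕ} [NeZero n] (X : Tensor3 a b n) (Y : Tensor3 b c n) :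
    Tensor3 a c n :=
  fun i j k => ∑ l : Fin b, ∑ m : ZMod n, X i l (k - m) * Y l j m

/-- The identity tensor: first frontal slice the identity matrix, rest zero. -/
def tId (a n : ℕ) : Tensor3 a a n := fun i j k => if i = j ∧ k = 0 then 1 else 0

/-- The tensor transpose: transpose every frontal slice and reverse the order
of the transposed slices 2 through n. -/
def tTr {a b n : ℕ} (X : Tensor3 a b n) : Tensor3 b a n := fun i j k => X j i (-k)

/-- The four Penrose equations for the Moore-Penrose pseudoinverse of a tensor
under the t-product (Definition 6 of the paper). -/
def tIsMP {a b n : ℕ} [NeZero n] (X : Tensor3 a b n) (B : Tensor3 b a n) : Prop :=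
  tmul X (tmul B X) = X ∧ tmul B (tmul X B) = B ∧
    tTr (tmul X B) = tmul X B ∧ tTr (tmul B X) = tmul B X

/-- The (unnormalized) discrete Fourier transform of a tube, with
ω = exp(−2πi/n): (dft x) k = Σ_m x_m ω^{k·m}. -/
noncomputable def dft (n : ℕ) [NeZero n] (x : ZMod n → ℝ) (k : ZMod n) : ℂ :=
  ∑ m : ZMod n, (x m : ℂ) * Complex.exp (-(2 * Real.pi * Complex.I) / n) ^ (k.val * m.val)

/-- The k-th frontal slice of fft(X,[],3): the DFT along every tube. -/
noncomputable def dftSlice {a b n : ℕ} [NeZero n] (X : Tensor3 a b n) (k : ZMod n) :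
    Matrix (Fin a) (Fin b) ℂ := fun i j => dft n (X i j) k

/-! The DFT along tubes turns the t-product into slice-wise matrix multiplication (circular
convolution theorem), the tensor transpose into slice-wise conjugate transposition (the tubes
are real), and the identity tensor into identity slices. As the DFT is injective, each of
`Qᵀ * Q = I` and `Q * Qᵀ = I` holds iff its image holds in every Fourier slice. -/

open scoped ZMod

section Fourier

variable {N : ℕ} [NeZero N]

lemma dft_eq_dft_ofReal (x : ZMod N → ℝ) : dft N x = 𝓕 (fun m => (x m : ℂ)) := by
  funext k
  refine Finset.sum_congr rfl fun m _ => ?_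
  rw [smul_eq_mul, mul_comm, ← Complex.exp_nat_mul,
    show -(m * k) = ((-(k.val * m.val : ℕ) : ℤ) : ZMod N) by simp [mul_comm],
    ZMod.stdAddChar_coe]
  congr 2
  push_cast
  ring

lemma dft_injective : Function.Injective (dft N) := by
  intro x y h
  rw [dft_eq_dft_ofReal, dft_eq_dft_ofReal] at h
  funext m
  exact_mod_cast congrFun (ZMod.dft.injective h) m

lemma dft_circConv (f g : ZMod N → ℂ) :
    𝓕 (fun k => ∑ m, f (k - m) * g m) = 𝓕 f * 𝓕 g := by
  funext k
  simp only [ZMod.dft_apply, smul_eq_mul, Pi.mul_apply, Finset.mul_sum, Finset.sum_mul]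
  rw [Finset.sum_comm]
  refine Finset.sum_congr rfl fun m _ => ?_
  refine (Fintype.sum_equiv (Equiv.addRight m) _ _ fun j => ?_).symm
  simp only [Equiv.coe_addRight, add_sub_cancel_right, add_mul, neg_add, AddChar.map_add_eq_mul]
  ring

lemma conj_dft (Φ : ZMod N → ℂ) (k : ZMod N) :
    starRingEnd ℂ (𝓕 Φ k) = 𝓕 (fun j => starRingEnd ℂ (Φ j)) (-k) := by
  simp only [ZMod.dft_apply, smul_eq_mul, map_sum, map_mul, ← AddChar.map_neg_eq_conj, mul_neg,
    neg_neg]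

lemma dft_comp_neg_eq_conj (x : ZMod N → ℝ) (k : ZMod N) :
    dft N (fun m => x (-m)) k = starRingEnd ℂ (dft N x k) := by
  rw [dft_eq_dft_ofReal, dft_eq_dft_ofReal, ZMod.dft_comp_neg (fun m => (x m : ℂ)), conj_dft]
  simp only [Complex.conj_ofReal]

end Fourier

section Slices

variable {a b c N : ℕ} [NeZero N]

lemma dftSlice_tmul (X : Tensor3 a b N) (Y : Tensor3 b c N) (k : ZMod N) :
    dftSlice (tmul X Y) k = dftSlice X k * dftSlice Y k := by
  ext i j
  have hconv : (fun m => (tmul X Y i j m : ℂ)) =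
      ∑ l, fun m => ∑ p, (X i l (m - p) : ℂ) * Y l j p := by
    funext m
    simp [tmul, Finset.sum_apply]
  simp only [dftSlice, Matrix.mul_apply, dft_eq_dft_ofReal, hconv, map_sum, Finset.sum_apply]
  exact Finset.sum_congr rfl fun l _ =>
    congrFun (dft_circConv (fun m => (X i l m : ℂ)) (fun m => Y l j m)) k

lemma dftSlice_tTr (X : Tensor3 a b N) (k : ZMod N) : dftSlice (tTr X) k = (dftSlice X k)ᴴ := by
  ext i j
  exact dft_comp_neg_eq_conj (X j i) k

lemma dftSlice_tId (k : ZMod N) : dftSlice (tId a N) k = 1 := by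
  ext i j
  by_cases h : i = j <;>
    simp [dftSlice, tId, h, Matrix.one_apply, dft_eq_dft_ofReal, ZMod.dft_apply, apply_ite]

lemma forall_dftSlice_eq_iff {X Y : Tensor3 a b N} :
    (∀ k, dftSlice X k = dftSlice Y k) ↔ X = Y :=
  ⟨fun h => funext₂ fun i j => dft_injective (funext fun k => congrFun₂ (h k) i j),
    fun h _ => h ▸ rfl⟩

end Slices

/-- A tensor is orthogonal under the t-product iff every frontal slice of its
Fourier transform is unitary. -/
theorem stmt16 {n I₃ : ℕ} [NeZero I₃] (Q : Tensor3 n n I₃) :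
    (tmul (tTr Q) Q = tId n I₃ ∧ tmul Q (tTr Q) = tId n I₃) ↔
      ∀ k : ZMod I₃,
        (dftSlice Q k)ᴴ * dftSlice Q k = 1 ∧ dftSlice Q k * (dftSlice Q k)ᴴ = 1 := by
  rw [← forall_dftSlice_eq_iff, ← forall_dftSlice_eq_iff, ← forall_and]
  simp only [dftSlice_tmul, dftSlice_tTr, dftSlice_tId]
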